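/- No pure r-mode with l ≥ m + 2 exists in an isentropic Newtonian star: let m ≥ 0 and l ≥ m + 2 be integers, and for integers j ≥ 1 set Q_j = √(((j+m)(j−m))/((2j−1)(2j+1))). Let U : (0,∞) → ℝ be differentiable and suppose that for all r > 0 both perturbed Euler equations −l Q_{l+1} Q_{l+2} [U'(r) − (l+1) U(r)/r] = 0 and (l+1) Q_{l−1} Q_l [U'(r) + l U(r)/r] = 0 hold (these are the equations satisfied by a velocity perturbation consisting of the single axial term with index l). Then U(r) = 0 for all r > 0; i.e. a purely axial mode belonging to a single spherical harmonic with l ≥ m + 2 cannot exist. -/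

import Mathlib

/-! Since `l ≥ m + 2`, the coefficients `Q_{l-1}, Q_l, Q_{l+1}, Q_{l+2}` are all positive, so each
Euler equation reduces to a first-order radial equation. The two radial equations
`U' = (l+1) U / r` and `U' = -l U / r` are incompatible unless `(2l+1) U / r = 0`. -/

noncomputable section

/-- The spherical-harmonic coupling coefficient
`Q_j = √(((j+m)(j−m))/((2j−1)(2j+1)))`. -/
def Qc (m j : ℕ) : ℝ :=
  Real.sqrt ((((j : ℝ) + (m : ℝ)) * ((j : ℝ) - (m : ℝ))) /
    ((2 * (j : ℝ) - 1) * (2 * (j : ℝ) + 1)))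

lemma Qc_pos {m j : ℕ} (h : m < j) : 0 < Qc m j := by
  have hmj : (m : ℝ) < j := by exact_mod_cast h
  have hj : (1 : ℝ) ≤ j := by exact_mod_cast Nat.one_le_of_lt h
  exact Real.sqrt_pos.mpr (div_pos (by nlinarith) (by nlinarith))

lemma eq_zero_of_sub_mul_eq_zero_of_add_mul_eq_zero {K : Type*} [Field K] {d u a b : K}
    (h₁ : d - a * u = 0) (h₂ : d + b * u = 0) (hab : a + b ≠ 0) : u = 0 := by
  have h : (a + b) * u = 0 := by linear_combination h₂ - h₁
  exact (mul_eq_zero_iff_left hab).mp h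

theorem no_pure_rmode_l_ge_m_plus_two_general (m l : ℕ) (hl : m + 2 ≤ l)
    (U : ℝ → ℝ)
    (h2 : ∀ r : ℝ, 0 < r →
      -(l : ℝ) * Qc m (l + 1) * Qc m (l + 2) *
        (deriv U r - ((l : ℝ) + 1) * U r / r) = 0)
    (h4 : ∀ r : ℝ, 0 < r →
      ((l : ℝ) + 1) * Qc m (l - 1) * Qc m l *
        (deriv U r + (l : ℝ) * U r / r) = 0) :
    ∀ r : ℝ, 0 < r → U r = 0 := by
  intro r hr
  have hl0 : (0 : ℝ) < l := by exact_mod_cast (by omega : 0 < l)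
  have hcoef₂ : -(l : ℝ) * Qc m (l + 1) * Qc m (l + 2) ≠ 0 := by
    have := Qc_pos (m := m) (j := l + 1) (by omega)
    have := Qc_pos (m := m) (j := l + 2) (by omega)
    rw [neg_mul, neg_mul, neg_ne_zero]
    positivity
  have hcoef₄ : ((l : ℝ) + 1) * Qc m (l - 1) * Qc m l ≠ 0 := by
    have := Qc_pos (m := m) (j := l - 1) (by omega)
    have := Qc_pos (m := m) (j := l) (by omega)
    positivity
  have hA : deriv U r - ((l : ℝ) + 1) * (U r / r) = 0 := by
    rw [← mul_div_assoc]
    exact (mul_eq_zero_iff_left hcoef₂).mp (h2 r hr)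
  have hB : deriv U r + (l : ℝ) * (U r / r) = 0 := by
    rw [← mul_div_assoc]
    exact (mul_eq_zero_iff_left hcoef₄).mp (h4 r hr)
  have hUr : U r / r = 0 :=
    eq_zero_of_sub_mul_eq_zero_of_add_mul_eq_zero hA hB (by positivity)
  simpa [hr.ne'] using hUr

/-- No pure r-mode with `l ≥ m + 2` exists in an isentropic Newtonian star:
if `U` is differentiable on `(0,∞)` and both perturbed Euler equations
`−l Q_{l+1} Q_{l+2} [U' − (l+1) U/r] = 0` and
`(l+1) Q_{l−1} Q_l [U' + l U/r] = 0` hold for all `r > 0`, then `U` vanishes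
identically on `(0,∞)`; i.e. a purely axial mode belonging to a single
spherical harmonic with `l ≥ m + 2` cannot exist. -/
theorem no_pure_rmode_l_ge_m_plus_two (m l : ℕ) (hl : m + 2 ≤ l)
    (U : ℝ → ℝ)
    (hUdiff : ∀ r : ℝ, 0 < r → DifferentiableAt ℝ U r)
    (h2 : ∀ r : ℝ, 0 < r →
      -(l : ℝ) * Qc m (l + 1) * Qc m (l + 2) *
        (deriv U r - ((l : ℝ) + 1) * U r / r) = 0)
    (h4 : ∀ r : ℝ, 0 < r →
      ((l : ℝ) + 1) * Qc m (l - 1) * Qc m l *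
        (deriv U r + (l : ℝ) * U r / r) = 0) :
    ∀ r : ℝ, 0 < r → U r = 0 :=
  no_pure_rmode_l_ge_m_plus_two_general m l hl U h2 h4
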